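/- Let P_t(x) = (1/(2πt)) exp(−|x|²/(2t)). For all a ∈ (0,∞), T₀ ∈ (0,∞), p ∈ ℝ_{≥0}, p₁, p₂ ∈ (0,∞), and y ∈ ℝ²: ∫_{ℝ²} ∫₀^{T₀} (|x'|^{p₁} + t^{p₂}) P_{at}(0) P_t(x') / (1 + |y − x'|^p) dt dx' ≤ C(a,p,p₁,p₂) (Σ_{j=1}^2 (T₀^{j p_j / 2} + T₀^{(j p_j + p)/2})) / (1 + |y|^p). -/

import Mathlib

/-!
Peetre's inequality `(1 + ‖y - x‖^p)⁻¹ ≤ 2^p (1 + ‖x‖^p) / (1 + ‖y‖^p)` removes `y`, at the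
cost of turning the weight into the four monomials `t^r ‖x‖^q` of
`(‖x‖^p₁ + t^p₂)(1 + ‖x‖^p)`. Since `u^q ≤ e^{q²} e^{u²/4}`, each satisfies
`‖x‖^q e^{-‖x‖²/2t} ≤ e^{q²} t^{q/2} e^{-‖x‖²/4t}`, and the Gaussian integral gives
`∫ ‖x‖^q P_t(x) dx ≤ 2 e^{q²} t^{q/2}`. With `P_{at}(0) = (2πat)⁻¹` the monomial contributes
`∫₀^{T₀} t^{r + q/2 - 1} dt = T₀^{r + q/2} / (r + q/2)`, which produces the four powers of `T₀`.
The integrand is nonnegative, so Tonelli lets us integrate in `x` first.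
-/

open MeasureTheory

/-- The two-dimensional heat kernel `P_t(x) = (2πt)⁻¹ exp(−‖x‖²/(2t))`. -/
noncomputable def heatK (t : ℝ) (x : EuclideanSpace ℝ (Fin 2)) : ℝ :=
  (2 * Real.pi * t)⁻¹ * Real.exp (-‖x‖ ^ 2 / (2 * t))

open Real Set Finset

theorem ofReal_integral_le_lintegral_ofReal {α : Type*} [MeasurableSpace α] {μ : Measure α}
    {f : α → ℝ} (hf : 0 ≤ᵐ[μ] f) :
    ENNReal.ofReal (∫ x, f x ∂μ) ≤ ∫⁻ x, ENNReal.ofReal (f x) ∂μ := by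
  by_cases hfi : Integrable f μ
  · exact (ofReal_integral_eq_lintegral_ofReal hfi hf).le
  · simp [integral_undef hfi]

theorem integral_integral_le_of_lintegral_lintegral_swap_le {α β : Type*}
    [MeasurableSpace α] [MeasurableSpace β] {μ : Measure α} {ν : Measure β} [SFinite μ]
    [SFinite ν] {f : α → β → ℝ}
    (hf : AEMeasurable (Function.uncurry fun x y => ENNReal.ofReal (f x y)) (μ.prod ν))
    (hf₀ : ∀ x, 0 ≤ᵐ[ν] f x) {B : ℝ} (hB₀ : 0 ≤ B)
    (hB : ∫⁻ y, ∫⁻ x, ENNReal.ofReal (f x y) ∂μ ∂ν ≤ ENNReal.ofReal B) :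
    ∫ x, ∫ y, f x y ∂ν ∂μ ≤ B := by
  rw [← ENNReal.ofReal_le_ofReal_iff hB₀]
  calc ENNReal.ofReal (∫ x, ∫ y, f x y ∂ν ∂μ)
      ≤ ∫⁻ x, ENNReal.ofReal (∫ y, f x y ∂ν) ∂μ :=
        ofReal_integral_le_lintegral_ofReal (ae_of_all _ fun x => integral_nonneg_of_ae (hf₀ x))
    _ ≤ ∫⁻ x, ∫⁻ y, ENNReal.ofReal (f x y) ∂ν ∂μ :=
        lintegral_mono fun x => ofReal_integral_le_lintegral_ofReal (hf₀ x)
    _ = ∫⁻ y, ∫⁻ x, ENNReal.ofReal (f x y) ∂μ ∂ν := lintegral_lintegral_swap hf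
    _ ≤ ENNReal.ofReal B := hB

theorem one_add_rpow_le_of_le_add {p u v w : ℝ} (hp : 0 ≤ p) (hu : 0 ≤ u) (hv : 0 ≤ v)
    (hw : 0 ≤ w) (h : w ≤ u + v) : 1 + w ^ p ≤ 2 ^ p * ((1 + u ^ p) * (1 + v ^ p)) := by
  have h2 : (1 : ℝ) ≤ 2 ^ p := one_le_rpow one_le_two hp
  have hup : 0 ≤ u ^ p := rpow_nonneg hu p
  have hvp : 0 ≤ v ^ p := rpow_nonneg hv p
  have hmax : w ^ p ≤ 2 ^ p * max (u ^ p) (v ^ p) := by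
    calc w ^ p ≤ (2 * max u v) ^ p :=
          rpow_le_rpow hw (by linarith [le_max_left u v, le_max_right u v]) hp
      _ = 2 ^ p * max (u ^ p) (v ^ p) := by
          rw [mul_rpow zero_le_two (hu.trans (le_max_left u v)), rpow_max hu hv hp]
  nlinarith [max_le_add_of_nonneg hup hvp, mul_nonneg hup hvp]

theorem inv_one_add_norm_sub_rpow_le {E : Type*} [SeminormedAddCommGroup E] {p : ℝ} (hp : 0 ≤ p)
    (x y : E) : (1 + ‖y - x‖ ^ p)⁻¹ ≤ 2 ^ p * (1 + ‖x‖ ^ p) / (1 + ‖y‖ ^ p) := by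
  have hy : 0 < 1 + ‖y‖ ^ p := by positivity
  rw [inv_eq_one_div, div_le_div_iff₀ (by positivity) hy, one_mul, mul_assoc]
  exact one_add_rpow_le_of_le_add hp (norm_nonneg _) (norm_nonneg _) (norm_nonneg _)
    (by simpa [add_comm] using norm_add_le (y - x) x)

theorem rpow_le_exp_sq_mul_exp_sq_div_four {q u : ℝ} (hq : 0 ≤ q) (hu : 0 ≤ u) :
    u ^ q ≤ exp (q ^ 2) * exp (u ^ 2 / 4) := by
  calc u ^ q ≤ exp u ^ q := rpow_le_rpow hu (by linarith [add_one_le_exp u]) hq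
    _ = exp (u * q) := by rw [← exp_mul]
    _ ≤ exp (q ^ 2 + u ^ 2 / 4) := exp_le_exp.2 (by nlinarith [sq_nonneg (q - u / 2)])
    _ = exp (q ^ 2) * exp (u ^ 2 / 4) := exp_add _ _

theorem rpow_mul_exp_neg_sq_div_le {q t c : ℝ} (hq : 0 ≤ q) (ht : 0 < t) (hc : 0 ≤ c) :
    c ^ q * exp (-c ^ 2 / (2 * t)) ≤
      exp (q ^ 2) * t ^ (q / 2) * exp (-(4 * t)⁻¹ * c ^ 2) := by
  have hsqrt : 0 < √t := sqrt_pos.2 ht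
  have hscale : c ^ q = t ^ (q / 2) * (c / √t) ^ q := by
    rw [div_rpow hc hsqrt.le, sqrt_eq_rpow, ← rpow_mul ht.le, one_div_mul_eq_div,
      mul_div_cancel₀ _ (rpow_pos_of_pos ht _).ne']
  have hsq : (c / √t) ^ 2 / 4 = c ^ 2 / (4 * t) := by rw [div_pow, sq_sqrt ht.le]; ring
  have hexp :
      exp (c ^ 2 / (4 * t)) * exp (-c ^ 2 / (2 * t)) = exp (-(4 * t)⁻¹ * c ^ 2) := by
    rw [← exp_add]; congr 1; field_simp; ring
  calc c ^ q * exp (-c ^ 2 / (2 * t))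
      ≤ t ^ (q / 2) * (exp (q ^ 2) * exp (c ^ 2 / (4 * t))) * exp (-c ^ 2 / (2 * t)) := by
        rw [hscale, ← hsq]
        gcongr
        exact rpow_le_exp_sq_mul_exp_sq_div_four hq (by positivity)
    _ = exp (q ^ 2) * t ^ (q / 2) * exp (-(4 * t)⁻¹ * c ^ 2) := by rw [← hexp]; ring

theorem lintegral_ofReal_exp_neg_mul_sq_norm {V : Type*} [NormedAddCommGroup V]
    [InnerProductSpace ℝ V] [FiniteDimensional ℝ V] [MeasurableSpace V] [BorelSpace V] {b : ℝ}
    (hb : 0 < b) :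
    ∫⁻ v : V, ENNReal.ofReal (exp (-b * ‖v‖ ^ 2)) =
      ENNReal.ofReal ((π / b) ^ (Module.finrank ℝ V / 2 : ℝ)) := by
  have hval := GaussianFourier.integral_rexp_neg_mul_sq_norm (V := V) hb
  rw [← hval, ofReal_integral_eq_lintegral_ofReal _ (ae_of_all _ fun v => (exp_pos _).le)]
  exact Integrable.of_integral_ne_zero (by rw [hval]; positivity)

theorem heatK_nonneg {t : ℝ} (ht : 0 ≤ t) (x : EuclideanSpace ℝ (Fin 2)) :
    0 ≤ heatK t x := by
  unfold heatK; positivity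

theorem heatK_zero (t : ℝ) : heatK t 0 = (2 * π * t)⁻¹ := by
  simp [heatK]

theorem sum_monomial_mul_heatK_le {ι : Type*} (s : Finset ι) (r q : ι → ℝ)
    (hq : ∀ i ∈ s, 0 ≤ q i) {t : ℝ} (ht : 0 < t) (x : EuclideanSpace ℝ (Fin 2)) :
    (∑ i ∈ s, t ^ r i * ‖x‖ ^ q i) * heatK t x ≤
      (2 * π * t)⁻¹ * (∑ i ∈ s, exp (q i ^ 2) * t ^ (r i + q i / 2)) *
        exp (-(4 * t)⁻¹ * ‖x‖ ^ 2) := by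
  calc (∑ i ∈ s, t ^ r i * ‖x‖ ^ q i) * heatK t x
      = (2 * π * t)⁻¹ *
          ∑ i ∈ s, t ^ r i * (‖x‖ ^ q i * exp (-‖x‖ ^ 2 / (2 * t))) := by
        rw [heatK, sum_mul, mul_sum]
        exact sum_congr rfl fun i _ => by ring
    _ ≤ (2 * π * t)⁻¹ * ∑ i ∈ s,
          t ^ r i * (exp (q i ^ 2) * t ^ (q i / 2) * exp (-(4 * t)⁻¹ * ‖x‖ ^ 2)) := by
        refine mul_le_mul_of_nonneg_left (sum_le_sum fun i hi => ?_) (by positivity)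
        exact mul_le_mul_of_nonneg_left
          (rpow_mul_exp_neg_sq_div_le (hq i hi) ht (norm_nonneg x)) (by positivity)
    _ = (2 * π * t)⁻¹ * (∑ i ∈ s, exp (q i ^ 2) * t ^ (r i + q i / 2)) *
          exp (-(4 * t)⁻¹ * ‖x‖ ^ 2) := by
        rw [mul_sum, mul_sum, sum_mul]
        exact sum_congr rfl fun i _ => by rw [rpow_add ht]; ring

theorem lintegral_sum_monomial_mul_heatK_le {ι : Type*} (s : Finset ι) (r q : ι → ℝ)
    (hq : ∀ i ∈ s, 0 ≤ q i) {t : ℝ} (ht : 0 < t) :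
    ∫⁻ x, ENNReal.ofReal ((∑ i ∈ s, t ^ r i * ‖x‖ ^ q i) * heatK t x) ≤
      ENNReal.ofReal (2 * ∑ i ∈ s, exp (q i ^ 2) * t ^ (r i + q i / 2)) := by
  set S := ∑ i ∈ s, exp (q i ^ 2) * t ^ (r i + q i / 2)
  have hS : 0 ≤ S := sum_nonneg fun i _ => by positivity
  calc ∫⁻ x, ENNReal.ofReal ((∑ i ∈ s, t ^ r i * ‖x‖ ^ q i) * heatK t x)
      ≤ ∫⁻ x, ENNReal.ofReal ((2 * π * t)⁻¹ * S) *
          ENNReal.ofReal (exp (-(4 * t)⁻¹ * ‖x‖ ^ 2)) :=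
        lintegral_mono fun x => by
          rw [← ENNReal.ofReal_mul (by positivity)]
          exact ENNReal.ofReal_le_ofReal (sum_monomial_mul_heatK_le s r q hq ht x)
    _ = ENNReal.ofReal ((2 * π * t)⁻¹ * S) * ENNReal.ofReal (π / (4 * t)⁻¹) := by
        rw [lintegral_const_mul' _ _ ENNReal.ofReal_ne_top,
          lintegral_ofReal_exp_neg_mul_sq_norm (by positivity)]
        simp
    _ = ENNReal.ofReal (2 * S) := by
        rw [← ENNReal.ofReal_mul (by positivity)]
        congr 1
        field_simp
        ring

theorem lintegral_Ioo_inv_mul_sum_rpow_le {ι : Type*} (s : Finset ι) (c β : ι → ℝ)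
    (hc : ∀ i ∈ s, 0 ≤ c i) (hβ : ∀ i ∈ s, 0 < β i) {T : ℝ} (hT : 0 < T) :
    ∫⁻ t in Ioo 0 T, ENNReal.ofReal (t⁻¹ * ∑ i ∈ s, c i * t ^ β i) ≤
      ENNReal.ofReal ((∑ i ∈ s, c i / β i) * ∑ i ∈ s, T ^ β i) := by
  have hint : ∀ i ∈ s, IntegrableOn (fun t => c i * t ^ (β i - 1)) (Ioo 0 T) := fun i hi =>
    (((intervalIntegrable_iff_integrableOn_Ioc_of_le hT.le).mp
      (intervalIntegral.intervalIntegrable_rpow' (by linarith [hβ i hi]))).mono_set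
        Ioo_subset_Ioc_self).const_mul _
  have hval : ∀ i ∈ s, ∫ t in Ioo 0 T, t ^ (β i - 1) = T ^ β i / β i := fun i hi => by
    rw [← integral_Ioc_eq_integral_Ioo, ← intervalIntegral.integral_of_le hT.le,
      integral_rpow (Or.inl (by linarith [hβ i hi])), sub_add_cancel, zero_rpow (hβ i hi).ne',
      sub_zero]
  have hnonneg :
      0 ≤ᵐ[volume.restrict (Ioo 0 T)] fun t => ∑ i ∈ s, c i * t ^ (β i - 1) := by
    filter_upwards [ae_restrict_mem measurableSet_Ioo] with t ht
    exact sum_nonneg fun i hi => mul_nonneg (hc i hi) (rpow_nonneg ht.1.le _)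
  calc ∫⁻ t in Ioo 0 T, ENNReal.ofReal (t⁻¹ * ∑ i ∈ s, c i * t ^ β i)
      = ∫⁻ t in Ioo 0 T, ENNReal.ofReal (∑ i ∈ s, c i * t ^ (β i - 1)) := by
        refine setLIntegral_congr_fun measurableSet_Ioo fun t ht => ?_
        simp_rw [mul_sum, rpow_sub_one ht.1.ne']
        exact congrArg _ (sum_congr rfl fun i _ => by ring)
    _ = ENNReal.ofReal (∑ i ∈ s, c i * (T ^ β i / β i)) := by
        rw [← ofReal_integral_eq_lintegral_ofReal (integrable_finsetSum _ hint) hnonneg,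
          integral_finsetSum _ hint]
        exact congrArg _ (sum_congr rfl fun i hi => by rw [integral_const_mul, hval i hi])
    _ ≤ ENNReal.ofReal ((∑ i ∈ s, c i / β i) * ∑ i ∈ s, T ^ β i) := by
        refine ENNReal.ofReal_le_ofReal ?_
        rw [mul_sum]
        refine sum_le_sum fun i hi => ?_
        rw [show c i * (T ^ β i / β i) = c i / β i * T ^ β i by ring]
        exact mul_le_mul_of_nonneg_right
          (single_le_sum (fun j hj => div_nonneg (hc j hj) (hβ j hj).le) hi) (by positivity)

theorem lintegral_weight_mul_heatK_div_le {ι : Type*} (s : Finset ι) (r q : ι → ℝ)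
    (hq : ∀ i ∈ s, 0 ≤ q i) {a p t : ℝ} (ha : 0 < a) (hp : 0 ≤ p) (ht : 0 < t)
    (y : EuclideanSpace ℝ (Fin 2)) {w : EuclideanSpace ℝ (Fin 2) → ℝ}
    (hw₀ : ∀ x, 0 ≤ w x)
    (hw : ∀ x, w x * (1 + ‖x‖ ^ p) ≤ ∑ i ∈ s, t ^ r i * ‖x‖ ^ q i) :
    ∫⁻ x, ENNReal.ofReal (w x * heatK (a * t) 0 * heatK t x / (1 + ‖y - x‖ ^ p)) ≤
      ENNReal.ofReal (2 ^ p / (1 + ‖y‖ ^ p) / (π * a)) *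
        ENNReal.ofReal (t⁻¹ * ∑ i ∈ s, exp (q i ^ 2) * t ^ (r i + q i / 2)) := by
  set A := 2 ^ p / (1 + ‖y‖ ^ p) * (2 * π * (a * t))⁻¹ with hA
  have hA₀ : 0 ≤ A := by positivity
  have hpoint : ∀ x, w x * heatK (a * t) 0 * heatK t x / (1 + ‖y - x‖ ^ p) ≤
      A * ((∑ i ∈ s, t ^ r i * ‖x‖ ^ q i) * heatK t x) := fun x => by
    have hk : 0 ≤ w x * heatK (a * t) 0 * heatK t x :=
      mul_nonneg (mul_nonneg (hw₀ x) (heatK_nonneg (by positivity) 0)) (heatK_nonneg ht.le x)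
    calc w x * heatK (a * t) 0 * heatK t x / (1 + ‖y - x‖ ^ p)
        ≤ w x * heatK (a * t) 0 * heatK t x *
            (2 ^ p * (1 + ‖x‖ ^ p) / (1 + ‖y‖ ^ p)) := by
          rw [div_eq_mul_inv]
          exact mul_le_mul_of_nonneg_left (inv_one_add_norm_sub_rpow_le hp x y) hk
      _ = A * ((w x * (1 + ‖x‖ ^ p)) * heatK t x) := by
          rw [hA, heatK_zero]
          ring
      _ ≤ A * ((∑ i ∈ s, t ^ r i * ‖x‖ ^ q i) * heatK t x) := by
          gcongr
          · exact heatK_nonneg ht.le x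
          · exact hw x
  calc ∫⁻ x, ENNReal.ofReal (w x * heatK (a * t) 0 * heatK t x / (1 + ‖y - x‖ ^ p))
      ≤ ∫⁻ x, ENNReal.ofReal A *
          ENNReal.ofReal ((∑ i ∈ s, t ^ r i * ‖x‖ ^ q i) * heatK t x) :=
        lintegral_mono fun x => by
          rw [← ENNReal.ofReal_mul hA₀]
          exact ENNReal.ofReal_le_ofReal (hpoint x)
    _ ≤ ENNReal.ofReal A *
          ENNReal.ofReal (2 * ∑ i ∈ s, exp (q i ^ 2) * t ^ (r i + q i / 2)) := by
        rw [lintegral_const_mul' _ _ ENNReal.ofReal_ne_top]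
        gcongr
        exact lintegral_sum_monomial_mul_heatK_le s r q hq ht
    _ = _ := by
        rw [← ENNReal.ofReal_mul hA₀, ← ENNReal.ofReal_mul (by positivity), hA]
        congr 1
        field_simp

theorem integral_integral_weight_mul_heatK_div_le {ι : Type*} (s : Finset ι) (r q : ι → ℝ)
    (hq : ∀ i ∈ s, 0 ≤ q i) (hβ : ∀ i ∈ s, 0 < r i + q i / 2) {a p T : ℝ} (ha : 0 < a)
    (hp : 0 ≤ p) (hT : 0 < T) (y : EuclideanSpace ℝ (Fin 2))
    {w : EuclideanSpace ℝ (Fin 2) → ℝ → ℝ} (hw_meas : Measurable (Function.uncurry w))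
    (hw₀ : ∀ x, ∀ t > 0, 0 ≤ w x t)
    (hw : ∀ x, ∀ t > 0, w x t * (1 + ‖x‖ ^ p) ≤ ∑ i ∈ s, t ^ r i * ‖x‖ ^ q i) :
    ∫ x, ∫ t in Ioo 0 T, w x t * heatK (a * t) 0 * heatK t x / (1 + ‖y - x‖ ^ p) ≤
      2 ^ p / (π * a) * (∑ i ∈ s, exp (q i ^ 2) / (r i + q i / 2)) *
        (∑ i ∈ s, T ^ (r i + q i / 2)) / (1 + ‖y‖ ^ p) := by
  set A := 2 ^ p / (1 + ‖y‖ ^ p) / (π * a)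
  have hD : 0 ≤ ∑ i ∈ s, exp (q i ^ 2) / (r i + q i / 2) :=
    sum_nonneg fun i hi => div_nonneg (exp_pos _).le (hβ i hi).le
  refine integral_integral_le_of_lintegral_lintegral_swap_le ?_ (fun x => ?_)
    (by positivity) ?_
  · unfold heatK; fun_prop
  · filter_upwards [ae_restrict_mem measurableSet_Ioo] with t ht
    have ht₀ := ht.1.le
    exact div_nonneg (mul_nonneg (mul_nonneg (hw₀ x t ht.1) (heatK_nonneg (by positivity) 0))
      (heatK_nonneg ht₀ x)) (by positivity)
  calc ∫⁻ t in Ioo 0 T, ∫⁻ x, ENNReal.ofReal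
        (w x t * heatK (a * t) 0 * heatK t x / (1 + ‖y - x‖ ^ p))
      ≤ ∫⁻ t in Ioo 0 T, ENNReal.ofReal A *
          ENNReal.ofReal (t⁻¹ * ∑ i ∈ s, exp (q i ^ 2) * t ^ (r i + q i / 2)) :=
        setLIntegral_mono' measurableSet_Ioo fun t ht =>
          lintegral_weight_mul_heatK_div_le s r q hq ha hp ht.1 y (fun x => hw₀ x t ht.1)
            fun x => hw x t ht.1
    _ ≤ ENNReal.ofReal A * ENNReal.ofReal
          ((∑ i ∈ s, exp (q i ^ 2) / (r i + q i / 2)) * ∑ i ∈ s, T ^ (r i + q i / 2)) := by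
        rw [lintegral_const_mul' _ _ ENNReal.ofReal_ne_top]
        gcongr
        exact lintegral_Ioo_inv_mul_sum_rpow_le s _ _ (fun i _ => (exp_pos _).le) hβ hT
    _ = _ := by
        rw [← ENNReal.ofReal_mul (by positivity)]
        congr 1
        ring

/-- For all `a ∈ (0,∞)`, `p ≥ 0`, `p₁, p₂ ∈ (0,∞)` there is `C(a,p,p₁,p₂)` such that
for all `T₀ ∈ (0,∞)` and `y ∈ ℝ²`:
`∫∫₀^{T₀} (‖x'‖^{p₁} + t^{p₂}) P_{at}(0) P_t(x')/(1 + ‖y − x'‖^p) dt dx'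
  ≤ C (Σ_{j=1}^2 (T₀^{j p_j/2} + T₀^{(j p_j + p)/2}))/(1 + ‖y‖^p)`. -/
theorem stmt_10 (a p p₁ p₂ : ℝ) (ha : 0 < a) (hp : 0 ≤ p) (hp₁ : 0 < p₁) (hp₂ : 0 < p₂) :
    ∃ C : ℝ, 0 < C ∧ ∀ T₀ : ℝ, 0 < T₀ → ∀ y : EuclideanSpace ℝ (Fin 2),
      (∫ x' : EuclideanSpace ℝ (Fin 2), ∫ t in Set.Ioo (0:ℝ) T₀,
          (‖x'‖ ^ p₁ + t ^ p₂) * heatK (a * t) 0 * heatK t x' / (1 + ‖y - x'‖ ^ p))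
        ≤ C * ((T₀ ^ ((1 * p₁)/2) + T₀ ^ ((1 * p₁ + p)/2))
              + (T₀ ^ ((2 * p₂)/2) + T₀ ^ ((2 * p₂ + p)/2))) / (1 + ‖y‖ ^ p) := by
  let r : Fin 4 → ℝ := ![0, 0, p₂, p₂]
  let q : Fin 4 → ℝ := ![p₁, p₁ + p, 0, p]
  have hq : ∀ i ∈ Finset.univ, 0 ≤ q i := by
    intro i _; fin_cases i <;> simp [q] <;> linarith
  have hβ : ∀ i ∈ Finset.univ, 0 < r i + q i / 2 := by
    intro i _; fin_cases i <;> simp [r, q] <;> linarith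
  have hexpand (t c : ℝ) (hc : 0 ≤ c) :
      (c ^ p₁ + t ^ p₂) * (1 + c ^ p) = ∑ i, t ^ r i * c ^ q i := by
    simp [Fin.sum_univ_four, r, q, rpow_add' hc (by linarith : p₁ + p ≠ 0)]
    ring
  have hD : 0 < ∑ i, exp (q i ^ 2) / (r i + q i / 2) :=
    sum_pos (fun i hi => div_pos (exp_pos _) (hβ i hi)) univ_nonempty
  refine ⟨2 ^ p / (π * a) * ∑ i, exp (q i ^ 2) / (r i + q i / 2), by positivity,
    fun T₀ hT y => ?_⟩
  calc _ ≤ _ := integral_integral_weight_mul_heatK_div_le univ r q hq hβ ha hp hT y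
          (w := fun x t => ‖x‖ ^ p₁ + t ^ p₂) (by fun_prop)
          (fun x t ht => by positivity) fun x t _ => (hexpand t ‖x‖ (norm_nonneg x)).le
    _ = _ := by
        congr 2
        simp [Fin.sum_univ_four, r, q]
        ring_nf
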